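/- Let (A, μ, α_A, β_A, R_A) be a λ-Rota-Baxter BiHom-associative algebra and (M, ▷, ◁, α_M, β_M) a BiHom-bimodule over A with a linear map R_M: M → M commuting with α_M and β_M. Define the semidirect product on A⊕M by (a+m)·(a'+m') := aa' + a▷m' + m◁a'. Then R_A⊕R_M is a Rota-Baxter operator of weight λ on the BiHom-associative algebra (A⊕M, ·, α_A⊕α_M, β_A⊕β_M) if and only if R_A(a)▷R_M(m) = R_M(a▷R_M(m) + R_A(a)▷m + λ a▷m) and R_M(m)◁R_A(a) = R_M(m◁R_A(a) + R_M(m)◁a + λ m◁a) for all a ∈ A, m ∈ M. -/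
import Mathlib


/-- BiHom-bimodule over a BiHom-associative algebra `(A, μ, α, β)`. -/
def BHBimod {K A M : Type*} [Field K] [AddCommGroup A] [Module K A]
    [AddCommGroup M] [Module K M]
    (μ : A →ₗ[K] A →ₗ[K] A) (α β : A →ₗ[K] A)
    (l : A →ₗ[K] M →ₗ[K] M) (r : M →ₗ[K] A →ₗ[K] M)
    (αM βM : M →ₗ[K] M) : Prop :=
  (∀ m, αM (βM m) = βM (αM m)) ∧
  (∀ a m, αM (l a m) = l (α a) (αM m)) ∧
  (∀ a m, βM (l a m) = l (β a) (βM m)) ∧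
  (∀ a b m, l (α a) (l b m) = l (μ a b) (βM m)) ∧
  (∀ m a, αM (r m a) = r (αM m) (α a)) ∧
  (∀ m a, βM (r m a) = r (βM m) (β a)) ∧
  (∀ m a b, r (αM m) (μ a b) = r (r m a) (β b)) ∧
  (∀ a m b, l (α a) (r m b) = r (l a m) (β b))

/-- for a `lam`-Rota-Baxter BiHom-associative algebra `(A, μ, α, β, RA)`
and a BiHom-bimodule `M` with `RM` commuting with `αM, βM`, the operator `RA ⊕ RM`
is a Rota-Baxter operator of weight `lam` on the semidirect product `A ⊕ M`
iff the two Rota-Baxter bimodule identities hold. -/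
theorem stmt3 (K A M : Type*) [Field K] [AddCommGroup A] [Module K A]
    [AddCommGroup M] [Module K M] (lam : K)
    (μ : A →ₗ[K] A →ₗ[K] A) (αA βA RA : A →ₗ[K] A)
    (l : A →ₗ[K] M →ₗ[K] M) (r : M →ₗ[K] A →ₗ[K] M)
    (αM βM RM : M →ₗ[K] M)
    -- `(A, μ, αA, βA, RA)` is a `lam`-Rota-Baxter BiHom-associative algebra
    (hAcomm : ∀ a, αA (βA a) = βA (αA a))
    (hαmul : ∀ a b, αA (μ a b) = μ (αA a) (αA b))
    (hβmul : ∀ a b, βA (μ a b) = μ (βA a) (βA b))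
    (hassoc : ∀ a b c, μ (αA a) (μ b c) = μ (μ a b) (βA c))
    (hRα : ∀ a, αA (RA a) = RA (αA a)) (hRβ : ∀ a, βA (RA a) = RA (βA a))
    (hRB : ∀ a b, μ (RA a) (RA b) = RA (μ a (RA b)) + RA (μ (RA a) b) + lam • RA (μ a b))
    -- `M` is a BiHom-bimodule over `A`
    (hbimod : BHBimod μ αA βA l r αM βM)
    (hRMα : ∀ m, αM (RM m) = RM (αM m)) (hRMβ : ∀ m, βM (RM m) = RM (βM m))
    -- the semidirect product structure on `A × M`
    (μP : A × M →ₗ[K] A × M →ₗ[K] A × M)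
    (hμP : ∀ (a : A) (m : M) (b : A) (n : M), μP (a, m) (b, n) = (μ a b, l a n + r m b))
    (αP βP RP : A × M →ₗ[K] A × M)
    (hαP : ∀ (a : A) (m : M), αP (a, m) = (αA a, αM m))
    (hβP : ∀ (a : A) (m : M), βP (a, m) = (βA a, βM m))
    (hRP : ∀ (a : A) (m : M), RP (a, m) = (RA a, RM m)) :
    ((∀ x, αP (RP x) = RP (αP x)) ∧ (∀ x, βP (RP x) = RP (βP x)) ∧
      (∀ x y, μP (RP x) (RP y) = RP (μP x (RP y)) + RP (μP (RP x) y) + lam • RP (μP x y)))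
    ↔
    ((∀ a m, l (RA a) (RM m) = RM (l a (RM m) + l (RA a) m + lam • l a m)) ∧
      (∀ m a, r (RM m) (RA a) = RM (r m (RA a) + r (RM m) a + lam • r m a))) := by
  constructor
  · rintro ⟨-, -, h3⟩
    constructor
    · intro a m
      have h := h3 (a, 0) (0, m)
      simp only [hRP, hμP, map_zero, LinearMap.zero_apply, add_zero, zero_add,
        Prod.smul_mk, smul_zero, Prod.mk_add_mk, Prod.mk.injEq, map_smul] at h
      rw [h.2, map_add, map_add, map_smul]
    · intro m a
      have h := h3 (0, m) (a, 0)
      simp only [hRP, hμP, map_zero, LinearMap.zero_apply, add_zero, zero_add,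
        Prod.smul_mk, smul_zero, Prod.mk_add_mk, Prod.mk.injEq, map_smul] at h
      rw [h.2, map_add, map_add, map_smul]
  · rintro ⟨h1, h2⟩
    refine ⟨?_, ?_, ?_⟩
    · rintro ⟨a, m⟩
      rw [hRP, hαP, hαP, hRP, hRα, hRMα]
    · rintro ⟨a, m⟩
      rw [hRP, hβP, hβP, hRP, hRβ, hRMβ]
    · rintro ⟨a, m⟩ ⟨b, n⟩
      rw [hRP, hRP, hμP, hμP, hμP, hμP, hRP, hRP, hRP]
      ext
      · simp [hRB]
      · simp only [Prod.smul_mk, Prod.mk_add_mk, Prod.snd_add, Prod.snd]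
        rw [h1 a n, h2 m b]
        simp only [map_add, map_smul, smul_add]
        abel
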